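/- Let s ∈ (0,1/2) and j ∈ ℕ, and define f_j(y) = ∫_{1}^{∞} e^{−y(σ−1)} [(σ²−1)^s/σ]^{j+1} dσ/σ for y ≥ 0. Then f_j is infinitely differentiable on (0,∞), and for each k ∈ ℕ there is a constant C_{k,j} such that |f_j^{(k)}(y)| ≤ C_{k,j} / y^{k+1+s(j+1)} for all y ∈ [1,∞), where f_j^{(k)} denotes the k-th derivative. -/

import Mathlib

/-!
Substituting `t = σ - 1`, `f_j` is the Laplace transform of `t ↦ g(1 + t)`, where
`g(σ) = ((σ² - 1)^s / σ)^{j+1} / σ` satisfies `|g(σ)| ≤ 2^a (σ - 1)^a` with `a = s(j+1)`.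
Differentiating under the integral sign, the `k`-th derivative is the Laplace transform of
`(-t)^k g(1 + t)`, which is dominated by `2^a t^{k+a} e^{-yt}`; integrating this bound gives `2^a Γ(k + a + 1) / y^{k+a+1}`.
-/

open MeasureTheory Real Set Filter
open scoped ContDiff

/-- The function `f_j(y) = ∫_1^∞ e^{-y(σ-1)} [(σ²-1)^s/σ]^{j+1} dσ/σ`. -/
noncomputable def fAux (s : ℝ) (j : ℕ) (y : ℝ) : ℝ :=
  ∫ σ in Set.Ioi (1 : ℝ), Real.exp (-(y * (σ - 1))) * ((σ ^ 2 - 1) ^ s / σ) ^ (j + 1) / σ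

lemma setIntegral_Ioi_one_eq_Ioi_zero (f : ℝ → ℝ) :
    ∫ σ in Ioi (1 : ℝ), f σ = ∫ t in Ioi (0 : ℝ), f (t + 1) := by
  rw [← (measurePreserving_add_right volume (1 : ℝ)).setIntegral_preimage_emb
    (Homeomorph.addRight (1 : ℝ)).measurableEmbedding f (Ioi 1)]
  congr 1
  ext t
  simp

lemma integrableOn_Ioi_one_iff_Ioi_zero (f : ℝ → ℝ) :
    IntegrableOn f (Ioi 1) ↔ IntegrableOn (fun t => f (t + 1)) (Ioi 0) := by
  rw [← (measurePreserving_add_right volume (1 : ℝ)).integrableOn_comp_preimage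
    (Homeomorph.addRight (1 : ℝ)).measurableEmbedding]
  have : (· + 1) ⁻¹' Ioi (1 : ℝ) = Ioi 0 := by ext t; simp
  rw [this]
  rfl

lemma integrableOn_sub_one_rpow_mul_exp {b r : ℝ} (hb : -1 < b) (hr : 0 < r) :
    IntegrableOn (fun σ => (σ - 1) ^ b * exp (-(r * (σ - 1)))) (Ioi 1) := by
  rw [integrableOn_Ioi_one_iff_Ioi_zero]
  simpa [neg_mul] using integrableOn_rpow_mul_exp_neg_mul_rpow hb zero_lt_one hr

lemma integral_sub_one_rpow_mul_exp {b r : ℝ} (hb : -1 < b) (hr : 0 < r) :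
    ∫ σ in Ioi (1 : ℝ), (σ - 1) ^ b * exp (-(r * (σ - 1))) = Gamma (b + 1) / r ^ (b + 1) := by
  rw [setIntegral_Ioi_one_eq_Ioi_zero]
  have h := integral_rpow_mul_exp_neg_mul_Ioi (a := b + 1) (by linarith) hr
  simp only [add_sub_cancel_right] at h ⊢
  rw [h, div_rpow zero_le_one hr.le, one_rpow]
  ring

lemma neg_one_lt_natCast_add {b : ℝ} (hb : -1 < b) (k : ℕ) : -1 < (k : ℝ) + b := by
  linarith [(Nat.cast_nonneg k : (0 : ℝ) ≤ k)]

noncomputable def laplaceMoment (g : ℝ → ℝ) (k : ℕ) (y : ℝ) : ℝ :=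
  ∫ σ in Ioi (1 : ℝ), (1 - σ) ^ k * (exp (-(y * (σ - 1))) * g σ)

namespace laplaceMoment

variable {g : ℝ → ℝ} {M b : ℝ}

lemma aestronglyMeasurable_integrand (hg : AEStronglyMeasurable g (volume.restrict (Ioi 1)))
    (k : ℕ) (y : ℝ) :
    AEStronglyMeasurable (fun σ => (1 - σ) ^ k * (exp (-(y * (σ - 1))) * g σ))
      (volume.restrict (Ioi 1)) :=
  (by fun_prop : Continuous fun σ : ℝ => (1 - σ) ^ k).aestronglyMeasurable.mul
    ((by fun_prop : Continuous fun σ : ℝ => exp (-(y * (σ - 1)))).aestronglyMeasurable.mul hg)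

lemma abs_integrand_le (hgM : ∀ σ, 1 < σ → |g σ| ≤ M * (σ - 1) ^ b) (k : ℕ) (y : ℝ) {σ : ℝ}
    (hσ : 1 < σ) :
    |(1 - σ) ^ k * (exp (-(y * (σ - 1))) * g σ)| ≤
      M * ((σ - 1) ^ ((k : ℝ) + b) * exp (-(y * (σ - 1)))) := by
  have ht : 0 < σ - 1 := by linarith
  rw [abs_mul, abs_mul, abs_pow, abs_sub_comm, abs_of_pos ht, abs_of_pos (exp_pos _),
    rpow_add ht, rpow_natCast]
  calc (σ - 1) ^ k * (exp (-(y * (σ - 1))) * |g σ|)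
      ≤ (σ - 1) ^ k * (exp (-(y * (σ - 1))) * (M * (σ - 1) ^ b)) := by
        gcongr
        exact hgM σ hσ
    _ = M * ((σ - 1) ^ k * (σ - 1) ^ b * exp (-(y * (σ - 1)))) := by ring

lemma ae_norm_integrand_le (hgM : ∀ σ, 1 < σ → |g σ| ≤ M * (σ - 1) ^ b) (k : ℕ) (y : ℝ) :
    ∀ᵐ σ ∂(volume.restrict (Ioi 1)), ‖(1 - σ) ^ k * (exp (-(y * (σ - 1))) * g σ)‖ ≤
      M * ((σ - 1) ^ ((k : ℝ) + b) * exp (-(y * (σ - 1)))) :=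
  (ae_restrict_iff' measurableSet_Ioi).2 <| .of_forall fun _ hσ => abs_integrand_le hgM k y hσ

lemma integrableOn_integrand (hg : AEStronglyMeasurable g (volume.restrict (Ioi 1)))
    (hgM : ∀ σ, 1 < σ → |g σ| ≤ M * (σ - 1) ^ b) (hb : -1 < b) (k : ℕ) {y : ℝ} (hy : 0 < y) :
    IntegrableOn (fun σ => (1 - σ) ^ k * (exp (-(y * (σ - 1))) * g σ)) (Ioi 1) :=
  Integrable.mono'
    ((integrableOn_sub_one_rpow_mul_exp (neg_one_lt_natCast_add hb k) hy).const_mul M)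
    (aestronglyMeasurable_integrand hg k y) (ae_norm_integrand_le hgM k y)

lemma hasDerivAt (hg : AEStronglyMeasurable g (volume.restrict (Ioi 1)))
    (hgM : ∀ σ, 1 < σ → |g σ| ≤ M * (σ - 1) ^ b) (hb : -1 < b) (k : ℕ) {y₀ : ℝ} (hy₀ : 0 < y₀) :
    HasDerivAt (laplaceMoment g k) (laplaceMoment g (k + 1) y₀) y₀ := by
  have hε : 0 < y₀ / 2 := by linarith
  -- on the ball of radius `y₀ / 2`, the decay rate of the exponential is at least `y₀ / 2`
  have hbound : ∀ᵐ σ ∂(volume.restrict (Ioi 1)), ∀ y ∈ Metric.ball y₀ (y₀ / 2),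
      ‖(1 - σ) ^ (k + 1) * (exp (-(y * (σ - 1))) * g σ)‖ ≤
        M * ((σ - 1) ^ (((k + 1 : ℕ) : ℝ) + b) * exp (-(y₀ / 2 * (σ - 1)))) := by
    refine (ae_restrict_iff' measurableSet_Ioi).2 (.of_forall fun σ hσ y hy => ?_)
    have hσ1 : (1 : ℝ) < σ := hσ
    have hy' : y₀ / 2 ≤ y := by
      rw [Metric.mem_ball, dist_eq, abs_lt] at hy
      linarith
    have hM : 0 ≤ M := by
      have := (abs_nonneg _).trans (hgM σ hσ1)
      exact nonneg_of_mul_nonneg_left this (rpow_pos_of_pos (by linarith) b)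
    refine (abs_integrand_le hgM (k + 1) y hσ1).trans ?_
    gcongr
  have hderiv : ∀ σ, ∀ y ∈ Metric.ball y₀ (y₀ / 2),
      HasDerivAt (fun y => (1 - σ) ^ k * (exp (-(y * (σ - 1))) * g σ))
        ((1 - σ) ^ (k + 1) * (exp (-(y * (σ - 1))) * g σ)) y := fun σ y _ => by
    refine ((((hasDerivAt_mul_const (σ - 1)).fun_neg.exp).mul_const (g σ)).const_mul
      ((1 - σ) ^ k)).congr_deriv ?_
    ring
  exact (hasDerivAt_integral_of_dominated_loc_of_deriv_le (Metric.ball_mem_nhds y₀ hε)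
    (.of_forall fun y => aestronglyMeasurable_integrand hg k y)
    (integrableOn_integrand hg hgM hb k hy₀) (aestronglyMeasurable_integrand hg (k + 1) y₀)
    hbound ((integrableOn_sub_one_rpow_mul_exp (neg_one_lt_natCast_add hb (k + 1)) hε).const_mul M)
    (.of_forall hderiv)).2

lemma iteratedDeriv_zero_eq (hg : AEStronglyMeasurable g (volume.restrict (Ioi 1)))
    (hgM : ∀ σ, 1 < σ → |g σ| ≤ M * (σ - 1) ^ b) (hb : -1 < b) (k : ℕ) {y : ℝ} (hy : 0 < y) :
    iteratedDeriv k (laplaceMoment g 0) y = laplaceMoment g k y := by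
  induction k generalizing y with
  | zero => rfl
  | succ k ih =>
    have heq : iteratedDeriv k (laplaceMoment g 0) =ᶠ[nhds y] laplaceMoment g k :=
      eventually_of_mem (isOpen_Ioi.mem_nhds hy) fun _ hz => ih hz
    rw [iteratedDeriv_succ, heq.deriv_eq, (hasDerivAt hg hgM hb k hy).deriv]

lemma contDiffOn (hg : AEStronglyMeasurable g (volume.restrict (Ioi 1)))
    (hgM : ∀ σ, 1 < σ → |g σ| ≤ M * (σ - 1) ^ b) (hb : -1 < b) (k : ℕ) :
    ContDiffOn ℝ ∞ (laplaceMoment g k) (Ioi 0) := by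
  refine contDiffOn_infty.2 fun n => ?_
  induction n generalizing k with
  | zero =>
    exact contDiffOn_zero.2 fun y hy =>
      (hasDerivAt hg hgM hb k hy).continuousAt.continuousWithinAt
  | succ n ih =>
    rw [Nat.cast_succ, contDiffOn_succ_iff_deriv_of_isOpen isOpen_Ioi]
    exact ⟨fun y hy => (hasDerivAt hg hgM hb k hy).differentiableAt.differentiableWithinAt,
      by simp, (ih (k + 1)).congr fun y hy => (hasDerivAt hg hgM hb k hy).deriv⟩

lemma abs_le (hgM : ∀ σ, 1 < σ → |g σ| ≤ M * (σ - 1) ^ b) (hb : -1 < b) (k : ℕ) {y : ℝ}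
    (hy : 0 < y) :
    |laplaceMoment g k y| ≤ M * Gamma (k + b + 1) / y ^ (k + b + 1) := by
  have h := norm_integral_le_of_norm_le
    ((integrableOn_sub_one_rpow_mul_exp (neg_one_lt_natCast_add hb k) hy).const_mul M)
    (ae_norm_integrand_le hgM k y)
  rwa [integral_const_mul, integral_sub_one_rpow_mul_exp (neg_one_lt_natCast_add hb k) hy,
    ← mul_div_assoc] at h

end laplaceMoment

lemma sq_sub_one_rpow_div_le {s σ : ℝ} (hs0 : 0 ≤ s) (hs1 : s ≤ 1) (hσ : 1 < σ) :
    (σ ^ 2 - 1) ^ s / σ ≤ 2 ^ s * (σ - 1) ^ s := by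
  have hσ0 : 0 < σ := by linarith
  rw [div_le_iff₀ hσ0]
  calc (σ ^ 2 - 1) ^ s = (σ - 1) ^ s * (σ + 1) ^ s := by
        rw [← mul_rpow (by linarith) (by linarith)]
        ring_nf
    _ ≤ (σ - 1) ^ s * (2 * σ) ^ s := by gcongr; linarith
    _ = 2 ^ s * (σ - 1) ^ s * σ ^ s := by rw [mul_rpow zero_le_two hσ0.le]; ring
    _ ≤ 2 ^ s * (σ - 1) ^ s * σ := by
        gcongr
        simpa using rpow_le_rpow_of_exponent_le hσ.le hs1

lemma abs_pow_succ_div_le {s σ : ℝ} (j : ℕ) (hs0 : 0 ≤ s) (hs1 : s ≤ 1) (hσ : 1 < σ) :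
    |((σ ^ 2 - 1) ^ s / σ) ^ (j + 1) / σ| ≤
      2 ^ (s * (j + 1)) * (σ - 1) ^ (s * (j + 1)) := by
  have hσ0 : 0 < σ := by linarith
  have hsq : 0 ≤ σ ^ 2 - 1 := by nlinarith
  have ht : 0 ≤ σ - 1 := by linarith
  rw [abs_of_nonneg (by positivity), ← mul_rpow zero_le_two ht, rpow_mul (by positivity),
    mul_rpow zero_le_two ht]
  calc ((σ ^ 2 - 1) ^ s / σ) ^ (j + 1) / σ
      ≤ ((σ ^ 2 - 1) ^ s / σ) ^ (j + 1) := div_le_self (by positivity) hσ.le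
    _ ≤ (2 ^ s * (σ - 1) ^ s) ^ (j + 1) := by
        gcongr
        exact sq_sub_one_rpow_div_le hs0 hs1 hσ
    _ = (2 ^ s * (σ - 1) ^ s) ^ ((j : ℝ) + 1) := by norm_cast

theorem stmt_7 (s : ℝ) (j : ℕ) (hs0 : 0 < s) (hs2 : s < 1 / 2) :
    ContDiffOn ℝ (⊤ : ℕ∞) (fAux s j) (Set.Ioi 0) ∧
    ∀ k : ℕ, ∃ C : ℝ, ∀ y : ℝ, 1 ≤ y →
      |iteratedDeriv k (fAux s j) y| ≤ C / y ^ ((k : ℝ) + 1 + s * ((j : ℝ) + 1)) := by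
  set g : ℝ → ℝ := fun σ => ((σ ^ 2 - 1) ^ s / σ) ^ (j + 1) / σ
  have hf : fAux s j = laplaceMoment g 0 := by
    funext y
    simp only [fAux, laplaceMoment, g, pow_zero, one_mul, mul_div_assoc]
  have hg : AEStronglyMeasurable g (volume.restrict (Ioi 1)) := by
    apply Measurable.aestronglyMeasurable
    fun_prop
  have hgM : ∀ σ, 1 < σ → |g σ| ≤ 2 ^ (s * (j + 1)) * (σ - 1) ^ (s * (j + 1)) :=
    fun σ hσ => abs_pow_succ_div_le j hs0.le (by linarith) hσ
  have hb : -1 < s * (j + 1) := by nlinarith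
  rw [hf]
  refine ⟨laplaceMoment.contDiffOn hg hgM hb 0, fun k =>
    ⟨2 ^ (s * (j + 1)) * Gamma (k + s * (j + 1) + 1), fun y hy => ?_⟩⟩
  have hy0 : 0 < y := by linarith
  rw [laplaceMoment.iteratedDeriv_zero_eq hg hgM hb k hy0,
    show (k : ℝ) + 1 + s * (j + 1) = k + s * (j + 1) + 1 by ring]
  exact laplaceMoment.abs_le hgM hb k hy0
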